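/- Let p be a prime, let j₁, j₂ ≥ 0 be integers, and let i be an integer coprime to p. Then the sublattice of ℤ² generated by (p^{j₁}, 0) and (i, p^{j₂}) lies in the same SL(2,ℤ)-orbit as the sublattice p^{j₁+j₂}ℤ × ℤ = {(x, y) ∈ ℤ² : p^{j₁+j₂} ∣ x}. -/

import Mathlib

/-- The additive group endomorphism of `ℤ × ℤ` given by multiplication by a matrix
`A ∈ SL(2, ℤ)`. -/
def SL2Map (A : Matrix.SpecialLinearGroup (Fin 2) ℤ) : (ℤ × ℤ) →+ (ℤ × ℤ) where
  toFun v := (A.1 0 0 * v.1 + A.1 0 1 * v.2, A.1 1 0 * v.1 + A.1 1 1 * v.2)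
  map_zero' := by simp
  map_add' v w := by simp [Prod.ext_iff]; constructor <;> ring

/-- The sublattice `mℤ × ℤ = {(x, y) ∈ ℤ² : m ∣ x}`. -/
def stripeLat (m : ℤ) : AddSubgroup (ℤ × ℤ) where
  carrier := {v : ℤ × ℤ | m ∣ v.1}
  zero_mem' := dvd_zero _
  add_mem' := fun ha hb => dvd_add ha hb
  neg_mem' := fun ha => dvd_neg.2 ha

/-!
With `u i + v n = 1`, the matrix `A = [[n, -i], [u, v]] ∈ SL(2, ℤ)` sends `(i, n)` to `(0, 1)`
and `(m, 0)` to `(m n, u m)`; and `(k, c)` together with `(0, 1)` generate `kℤ × ℤ` for any `c`.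
-/

lemma SL2Map_apply (A : Matrix.SpecialLinearGroup (Fin 2) ℤ) (v : ℤ × ℤ) :
    SL2Map A v = (A.1 0 0 * v.1 + A.1 0 1 * v.2, A.1 1 0 * v.1 + A.1 1 1 * v.2) :=
  rfl

lemma stripeLat_eq_closure (m c : ℤ) :
    stripeLat m = AddSubgroup.closure {((m, c) : ℤ × ℤ), (0, 1)} := by
  apply le_antisymm
  · rintro ⟨x, y⟩ ⟨k, rfl⟩
    have hxy : ((m * k, y) : ℤ × ℤ) = k • (m, c) + (y - k * c) • (0, 1) := by
      simp only [Prod.smul_mk, Prod.mk_add_mk, smul_eq_mul, Prod.ext_iff]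
      constructor <;> ring
    rw [hxy]
    exact add_mem (zsmul_mem (AddSubgroup.subset_closure (by simp)) k)
      (zsmul_mem (AddSubgroup.subset_closure (by simp)) _)
  · rw [AddSubgroup.closure_le]
    rintro v (rfl | rfl)
    · exact dvd_refl m
    · exact dvd_zero m

def coprimeCompletion {i n u v : ℤ} (h : u * i + v * n = 1) :
    Matrix.SpecialLinearGroup (Fin 2) ℤ :=
  ⟨!![n, -i; u, v], by rw [Matrix.det_fin_two_of]; linear_combination h⟩

lemma SL2Map_coprimeCompletion_left {i n u v : ℤ} (h : u * i + v * n = 1) (m : ℤ) :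
    SL2Map (coprimeCompletion h) (m, 0) = (m * n, u * m) := by
  rw [SL2Map_apply]
  simp [coprimeCompletion, mul_comm]

lemma SL2Map_coprimeCompletion_right {i n u v : ℤ} (h : u * i + v * n = 1) :
    SL2Map (coprimeCompletion h) (i, n) = (0, 1) := by
  rw [SL2Map_apply]
  simpa [coprimeCompletion, mul_comm] using h

theorem exists_map_closure_eq_stripeLat {i n : ℤ} (hi : IsCoprime i n) (m : ℤ) :
    ∃ A : Matrix.SpecialLinearGroup (Fin 2) ℤ,
      (AddSubgroup.closure {((m, 0) : ℤ × ℤ), (i, n)}).map (SL2Map A) = stripeLat (m * n) := by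
  obtain ⟨u, v, h⟩ := hi
  refine ⟨coprimeCompletion h, ?_⟩
  rw [AddMonoidHom.map_closure, Set.image_pair, SL2Map_coprimeCompletion_left,
    SL2Map_coprimeCompletion_right, stripeLat_eq_closure (m * n) (u * m)]

theorem coprime_lattice_orbit_general (p : ℕ) (j₁ j₂ : ℕ) (i : ℤ)
    (hi : IsCoprime i (p : ℤ)) :
    ∃ A : Matrix.SpecialLinearGroup (Fin 2) ℤ,
      (AddSubgroup.closure {(((p : ℤ) ^ j₁, 0) : ℤ × ℤ), (i, (p : ℤ) ^ j₂)}).map (SL2Map A)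
        = stripeLat ((p : ℤ) ^ (j₁ + j₂)) := by
  rw [pow_add]
  exact exists_map_closure_eq_stripeLat (hi.pow_right (n := j₂)) _

/-- For a prime `p` and `i` coprime to `p`, the sublattice of `ℤ²` generated by
`(p^{j₁}, 0)` and `(i, p^{j₂})` lies in the same `SL(2, ℤ)`-orbit as the sublattice
`p^{j₁+j₂}ℤ × ℤ = {(x, y) : p^{j₁+j₂} ∣ x}`. -/
theorem coprime_lattice_orbit (p : ℕ) (hp : p.Prime) (j₁ j₂ : ℕ) (i : ℤ)
    (hi : IsCoprime i (p : ℤ)) :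
    ∃ A : Matrix.SpecialLinearGroup (Fin 2) ℤ,
      (AddSubgroup.closure {(((p : ℤ) ^ j₁, 0) : ℤ × ℤ), (i, (p : ℤ) ^ j₂)}).map (SL2Map A)
        = stripeLat ((p : ℤ) ^ (j₁ + j₂)) :=
  coprime_lattice_orbit_general p j₁ j₂ i hi
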